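/- arXiv:math/0004027 — 2 statements merged into one kernel-verified Lean document; each statement's English description precedes it below -/
import Mathlib

section
/- Given a signature ε of the restricted root system Δ = Δ(𝔤,𝔞) of a semisimple Lie algebra 𝔤 with root space decomposition 𝔤 = 𝔷_𝔤(𝔞) ⊕ ⨁_{α∈Δ} 𝔤^α, the linear map σ_ε defined by σ_ε(X) = X for X ∈ 𝔷_𝔤(𝔞) and σ_ε(X) = ε(α)X for X ∈ 𝔤^α is an involutive Lie algebra automorphism of 𝔤. -/
/-!
Because `𝔷` and the root spaces `𝔤^α` (`α ∈ Δ`) form an internal direct sum, `σ_ε` is well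
defined as the map scaling `𝔷` by `1` and `𝔤^α` by `ε α`. It is an involution since
`ε α ^ 2 = 1`. It preserves brackets because, by the bracket relations, the bracket of two
summands lies in (or vanishes outside) a summand whose sign is the product of their signs:
for `α + β ∈ Δ` this is the multiplicativity of `ε`, and for `α + β = 0` it is
`ε (-α) * ε α = ε α ^ 2 = 1`.
-/

open Function

theorem LinearMap.ext_of_iSup_eq_top {ι R M N : Type*} [Semiring R] [AddCommMonoid M]
    [Module R M] [AddCommMonoid N] [Module R N] {V : ι → Submodule R M} (hV : ⨆ i, V i = ⊤)
    {f g : M →ₗ[R] N} (h : ∀ i, ∀ x ∈ V i, f x = g x) : f = g :=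
  LinearMap.ext_on (s := ⋃ i, (V i : Set M)) (by rw [Submodule.span_iUnion]; simpa using hV)
    fun x hx ↦ by obtain ⟨i, hi⟩ := Set.mem_iUnion.1 hx; exact h i x hi

theorem iSupIndep_of_finsum_eq_zero {ι R M : Type*} [Ring R] [AddCommGroup M] [Module R M]
    {p : ι → Submodule R M}
    (h : ∀ f : ι → M, (∀ i, f i ∈ p i) → (support f).Finite → ∑ᶠ i, f i = 0 → ∀ i, f i = 0) :
    iSupIndep p := by
  rw [iSupIndep_iff_finsetSum_eq_zero_imp_eq_zero]
  intro s v hv hsum i hi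
  have hmem : ∀ j, (s : Set ι).indicator v j ∈ p j := by
    intro j
    by_cases hj : j ∈ s <;> simp [hj, hv]
  have := h _ hmem (s.finite_toSet.subset Set.support_indicator_subset)
    (by rwa [← finsum_mem_def, finsum_mem_coe_finset]) i
  simpa [hi] using this

namespace DirectSum.IsInternal

section Module

variable {ι R M : Type*} [DecidableEq ι] [CommSemiring R] [AddCommMonoid M] [Module R M]
  {V : ι → Submodule R M}

noncomputable def smulComponents (h : IsInternal V) (c : ι → R) : M →ₗ[R] M :=
  toModule R ι M (fun i ↦ c i • (V i).subtype) ∘ₗ (LinearEquiv.ofBijective (coeLinearMap V) h).symm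

theorem smulComponents_apply_of_mem (h : IsInternal V) (c : ι → R) {i : ι} {x : M}
    (hx : x ∈ V i) : h.smulComponents c x = c i • x := by
  have : (LinearEquiv.ofBijective (coeLinearMap V) h).symm x = lof R ι (fun i ↦ V i) i ⟨x, hx⟩ :=
    (LinearEquiv.symm_apply_eq _).2 (coeLinearMap_of V i ⟨x, hx⟩).symm
  rw [smulComponents, LinearMap.comp_apply, LinearEquiv.coe_coe, this, toModule_lof]
  rfl

theorem smulComponents_involutive (h : IsInternal V) {c : ι → R} (hc : ∀ i, c i * c i = 1) :
    Involutive (h.smulComponents c) := by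
  have : h.smulComponents c ∘ₗ h.smulComponents c = LinearMap.id :=
    LinearMap.ext_of_iSup_eq_top h.submodule_iSup_eq_top fun i x hx ↦ by
      simp [smulComponents_apply_of_mem h c hx,
        smulComponents_apply_of_mem h c ((V i).smul_mem _ hx), smul_smul, hc]
  exact LinearMap.congr_fun this

end Module

section LieAlgebra

variable {ι R L : Type*} [DecidableEq ι] [CommRing R] [LieRing L] [LieAlgebra R L]
  {V : ι → Submodule R L}

theorem smulComponents_lie (h : IsInternal V) {c : ι → R}
    (hc : ∀ i j, ∀ x ∈ V i, ∀ y ∈ V j, ⁅x, y⁆ = 0 ∨ ∃ k, c k = c i * c j ∧ ⁅x, y⁆ ∈ V k)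
    (x y : L) : h.smulComponents c ⁅x, y⁆ = ⁅h.smulComponents c x, h.smulComponents c y⁆ := by
  set σ := h.smulComponents c
  let ad : L →ₗ[R] L →ₗ[R] L := LieAlgebra.ad R L
  suffices ad.compr₂ σ = ad.compl₂ σ ∘ₗ σ from LinearMap.congr_fun₂ this x y
  refine LinearMap.ext_of_iSup_eq_top h.submodule_iSup_eq_top fun i x hx ↦
    LinearMap.ext_of_iSup_eq_top h.submodule_iSup_eq_top fun j y hy ↦ ?_
  simp only [LinearMap.compr₂_apply, LinearMap.comp_apply, LinearMap.compl₂_apply, ad,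
    LieHom.coe_toLinearMap, LieAlgebra.ad_apply, σ, smulComponents_apply_of_mem h c hx,
    smulComponents_apply_of_mem h c hy, smul_lie, lie_smul, smul_smul]
  rcases hc i j x hx y hy with h0 | ⟨k, hk, hmem⟩
  · simp [h0]
  · rw [smulComponents_apply_of_mem h c hmem, hk, mul_comm]

end LieAlgebra

end DirectSum.IsInternal

section RootDecomposition

variable {R L A : Type*} [CommRing R] [LieRing L] [LieAlgebra R L]

def rootSummand (z : Submodule R L) (g : A → Submodule R L) (Δ : Set A) :
    Option Δ → Submodule R L :=
  fun o ↦ o.elim z fun α ↦ g α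

def rootSummandSign {Δ : Set A} (ε : A → R) : Option Δ → R :=
  fun o ↦ o.elim 1 fun α ↦ ε α

variable {z : Submodule R L} {g : A → Submodule R L} {Δ : Set A}

theorem iSup_rootSummand (hsup : z ⊔ (⨆ α ∈ Δ, g α) = ⊤) : ⨆ o, rootSummand z g Δ o = ⊤ := by
  rw [iSup_option, ← hsup, iSup_subtype']
  rfl

theorem iSupIndep_rootSummand
    (hindep : ∀ x ∈ z, ∀ f : A → L, (∀ α, f α ∈ g α) ∧ (∀ α ∉ Δ, f α = 0) ∧
        (Set.Finite {α | f α ≠ 0}) → x + ∑ᶠ α, f α = 0 → x = 0 ∧ ∀ α, f α = 0) :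
    iSupIndep (rootSummand z g Δ) := by
  let W : Option A → Submodule R L := fun o ↦ o.elim z fun α ↦ ⨆ _ : α ∈ Δ, g α
  -- `W` is `⊥` off `Δ`, which turns `hindep` into independence of a family over `Option A`.
  have hW : iSupIndep W := iSupIndep_of_finsum_eq_zero fun f hf hfin hsum ↦ by
    have hfg : ∀ α, f (some α) ∈ g α ∧ (α ∉ Δ → f (some α) = 0) := by
      intro α
      by_cases hα : α ∈ Δ
      · simpa [W, iSup_pos hα, hα] using hf (some α)
      · have h0 : f (some α) = 0 := by simpa [W, iSup_neg hα] using hf (some α)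
        simp [h0]
    have hfin' : (support (f ∘ some)).Finite := hfin.preimage (Option.some_injective _).injOn
    obtain ⟨hnone, hsome⟩ := hindep (f none) (hf none) (f ∘ some)
      ⟨fun α ↦ (hfg α).1, fun α hα ↦ (hfg α).2 hα, hfin'⟩ (by rwa [finsum_option hfin'] at hsum)
    rintro (_ | α)
    exacts [hnone, hsome α]
  convert hW.comp (Option.map_injective Subtype.val_injective)
  refine funext ?_
  rintro (_ | ⟨α, hα⟩)
  · rfl
  · simp [rootSummand, W, iSup_pos hα]

theorem isInternal_rootSummand [DecidableEq (Option Δ)] (hsup : z ⊔ (⨆ α ∈ Δ, g α) = ⊤)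
    (hindep : ∀ x ∈ z, ∀ f : A → L, (∀ α, f α ∈ g α) ∧ (∀ α ∉ Δ, f α = 0) ∧
        (Set.Finite {α | f α ≠ 0}) → x + ∑ᶠ α, f α = 0 → x = 0 ∧ ∀ α, f α = 0) :
    DirectSum.IsInternal (rootSummand z g Δ) :=
  (DirectSum.isInternal_submodule_iff_iSupIndep_and_iSup_eq_top _).2
    ⟨iSupIndep_rootSummand hindep, iSup_rootSummand hsup⟩

theorem rootSummand_lie_eq_zero_or_mem [AddCommGroup A] {ε : A → R}
    (hzz : ∀ x ∈ z, ∀ y ∈ z, ⁅x, y⁆ ∈ z)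
    (hzg : ∀ α ∈ Δ, ∀ x ∈ z, ∀ y ∈ g α, ⁅x, y⁆ ∈ g α)
    (hgg : ∀ α ∈ Δ, ∀ β ∈ Δ, ∀ x ∈ g α, ∀ y ∈ g β,
        (α + β ∈ Δ → ⁅x, y⁆ ∈ g (α + β)) ∧
        (α + β = 0 → ⁅x, y⁆ ∈ z) ∧
        (α + β ∉ Δ → α + β ≠ 0 → ⁅x, y⁆ = 0))
    (hεsq : ∀ α ∈ Δ, ε α * ε α = 1) (hεneg : ∀ α ∈ Δ, ε (-α) = ε α)
    (hεadd : ∀ α ∈ Δ, ∀ β ∈ Δ, α + β ∈ Δ → ε (α + β) = ε α * ε β)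
    (i j : Option Δ) (x : L) (hx : x ∈ rootSummand z g Δ i) (y : L)
    (hy : y ∈ rootSummand z g Δ j) :
    ⁅x, y⁆ = 0 ∨ ∃ k, rootSummandSign ε k = rootSummandSign ε i * rootSummandSign ε j ∧
      ⁅x, y⁆ ∈ rootSummand z g Δ k := by
  rcases i with _ | ⟨α, hα⟩ <;> rcases j with _ | ⟨β, hβ⟩
  · exact .inr ⟨none, (one_mul 1).symm, hzz x hx y hy⟩
  · exact .inr ⟨some ⟨β, hβ⟩, (one_mul _).symm, hzg β hβ x hx y hy⟩
  · refine .inr ⟨some ⟨α, hα⟩, (mul_one _).symm, ?_⟩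
    rw [← lie_skew]
    exact neg_mem (hzg α hα y hy x hx)
  · obtain ⟨hin, hzero, hout⟩ := hgg α hα β hβ x hx y hy
    by_cases hαβ : α + β ∈ Δ
    · exact .inr ⟨some ⟨α + β, hαβ⟩, hεadd α hα β hβ hαβ, hin hαβ⟩
    by_cases h0 : α + β = 0
    · refine .inr ⟨none, ?_, hzero h0⟩
      change 1 = ε α * ε β
      rw [eq_neg_of_add_eq_zero_right h0, hεneg α hα, hεsq α hα]
    · exact .inl (hout hαβ h0)

end RootDecomposition

theorem stmt_1_general {L : Type*} [LieRing L] [LieAlgebra ℝ L]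
    {A : Type*} [AddCommGroup A]    -- the space 𝔞* containing the roots
    (Δ : Set A)
    (z : Submodule ℝ L) (g : A → Submodule ℝ L)
    -- direct sum decomposition 𝔤 = 𝔷_𝔤(𝔞) ⊕ ⨁_{α∈Δ} 𝔤^α
    (hsup : z ⊔ (⨆ α ∈ Δ, g α) = ⊤)
    (hindep : ∀ x ∈ z, ∀ f : A → L, (∀ α, f α ∈ g α) ∧ (∀ α ∉ Δ, f α = 0) ∧
        (Set.Finite {α | f α ≠ 0}) → x + ∑ᶠ α, f α = 0 →
        x = 0 ∧ ∀ α, f α = 0)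
    -- bracket relations of the root space decomposition
    (hzz : ∀ x ∈ z, ∀ y ∈ z, ⁅x, y⁆ ∈ z)
    (hzg : ∀ α ∈ Δ, ∀ x ∈ z, ∀ y ∈ g α, ⁅x, y⁆ ∈ g α)
    (hgg : ∀ α ∈ Δ, ∀ β ∈ Δ, ∀ x ∈ g α, ∀ y ∈ g β,
        (α + β ∈ Δ → ⁅x, y⁆ ∈ g (α + β)) ∧
        (α + β = 0 → ⁅x, y⁆ ∈ z) ∧
        (α + β ∉ Δ → α + β ≠ 0 → ⁅x, y⁆ = 0))
    -- a signature of Δ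
    (ε : A → ℝ) (hε1 : ∀ α ∈ Δ, ε α = 1 ∨ ε α = -1)
    (hεneg : ∀ α ∈ Δ, ε (-α) = ε α)
    (hεadd : ∀ α ∈ Δ, ∀ β ∈ Δ, α + β ∈ Δ → ε (α + β) = ε α * ε β) :
    ∃ σ : L ≃ₗ⁅ℝ⁆ L,
      (∀ x, σ (σ x) = x) ∧
      (∀ x ∈ z, σ x = x) ∧
      (∀ α ∈ Δ, ∀ x ∈ g α, σ x = ε α • x) := by
  classical
  have hεsq : ∀ α ∈ Δ, ε α * ε α = 1 := fun α hα ↦ by rcases hε1 α hα with h | h <;> simp [h]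
  have hV := isInternal_rootSummand hsup hindep
  let σ : L →ₗ⁅ℝ⁆ L :=
    { hV.smulComponents (rootSummandSign ε) with
      map_lie' := hV.smulComponents_lie
        (rootSummand_lie_eq_zero_or_mem hzz hzg hgg hεsq hεneg hεadd) _ _ }
  have hσ : Involutive σ := hV.smulComponents_involutive fun o ↦ by
    rcases o with _ | ⟨α, hα⟩
    exacts [one_mul 1, hεsq α hα]
  refine ⟨LieEquiv.ofBijective σ hσ.bijective, hσ, fun x hx ↦ ?_, fun α hα x hx ↦ ?_⟩
  · exact (hV.smulComponents_apply_of_mem _ (i := none) hx).trans (one_smul ℝ x)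
  · exact hV.smulComponents_apply_of_mem _ (i := some ⟨α, hα⟩) hx

/-- Given a root space decomposition `𝔤 = 𝔷 ⊕ ⨁_{α∈Δ} 𝔤^α` of a Lie algebra and a
signature `ε` of `Δ`, the map fixing `𝔷` and acting by `ε(α)` on `𝔤^α` is an
involutive Lie algebra automorphism. -/
theorem stmt_1 {L : Type*} [LieRing L] [LieAlgebra ℝ L]
    {A : Type*} [AddCommGroup A]    -- the space 𝔞* containing the roots
    (Δ : Set A) (hneg : ∀ α ∈ Δ, -α ∈ Δ)
    (z : Submodule ℝ L) (g : A → Submodule ℝ L)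
    -- direct sum decomposition 𝔤 = 𝔷_𝔤(𝔞) ⊕ ⨁_{α∈Δ} 𝔤^α
    (hsup : z ⊔ (⨆ α ∈ Δ, g α) = ⊤)
    (hindep : ∀ x ∈ z, ∀ f : A → L, (∀ α, f α ∈ g α) ∧ (∀ α ∉ Δ, f α = 0) ∧
        (Set.Finite {α | f α ≠ 0}) → x + ∑ᶠ α, f α = 0 →
        x = 0 ∧ ∀ α, f α = 0)
    -- bracket relations of the root space decomposition
    (hzz : ∀ x ∈ z, ∀ y ∈ z, ⁅x, y⁆ ∈ z)
    (hzg : ∀ α ∈ Δ, ∀ x ∈ z, ∀ y ∈ g α, ⁅x, y⁆ ∈ g α)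
    (hgg : ∀ α ∈ Δ, ∀ β ∈ Δ, ∀ x ∈ g α, ∀ y ∈ g β,
        (α + β ∈ Δ → ⁅x, y⁆ ∈ g (α + β)) ∧
        (α + β = 0 → ⁅x, y⁆ ∈ z) ∧
        (α + β ∉ Δ → α + β ≠ 0 → ⁅x, y⁆ = 0))
    -- a signature of Δ
    (ε : A → ℝ) (hε1 : ∀ α ∈ Δ, ε α = 1 ∨ ε α = -1)
    (hεneg : ∀ α ∈ Δ, ε (-α) = ε α)
    (hεadd : ∀ α ∈ Δ, ∀ β ∈ Δ, α + β ∈ Δ → ε (α + β) = ε α * ε β) :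
    ∃ σ : L ≃ₗ⁅ℝ⁆ L,
      (∀ x, σ (σ x) = x) ∧
      (∀ x ∈ z, σ x = x) ∧
      (∀ α ∈ Δ, ∀ x ∈ g α, σ x = ε α • x) :=
  stmt_1_general Δ z g hsup hindep hzz hzg hgg ε hε1 hεneg hεadd
end

section
/- Let Δ be a root system with positive system Δ⁺ and let X₀ be an element of the dual space such that α(X₀) ∈ {0,1} for all α ∈ Δ⁺, with Δₙ⁺ := {α ∈ Δ⁺: α(X₀)=1} nonempty. If R is any positive system of Δ with R ∩ Δₙ⁺ ≠ ∅ (where Δₙ := Δₙ⁺ ∪ (−Δₙ⁺)), then R ∩ Δₙ⁺ contains a root which is simple in R. -/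
/-!
Write a root `γ ∈ R ∩ Δₙ⁺` as `∑ c β • β` over the simple roots `β` of `R` with `c β ≥ 0`.
Since `γ(X₀) = 1 > 0`, some simple root `β` has `β(X₀) > 0`. As `±β ∈ Δ⁺` and positive roots
take only the values `0, 1` on `X₀`, this forces `β ∈ Δ⁺` and `β(X₀) = 1`.
-/

theorem exists_pos_apply_of_sum_smul_apply_pos {𝔞 ι : Type*} [AddCommGroup 𝔞] [Module ℝ 𝔞]
    {s : Finset ι} {c : ι → ℝ} (hc : ∀ i ∈ s, 0 ≤ c i) {v : ι → Module.Dual ℝ 𝔞} {x : 𝔞}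
    (h : 0 < (∑ i ∈ s, c i • v i) x) : ∃ i ∈ s, 0 < v i x := by
  by_contra! hle
  rw [LinearMap.sum_apply] at h
  refine h.not_ge (Finset.sum_nonpos fun i hi => ?_)
  exact mul_nonpos_of_nonneg_of_nonpos (hc i hi) (hle i hi)

theorem mem_and_apply_eq_one_of_apply_pos {𝔞 : Type*} [AddCommGroup 𝔞] [Module ℝ 𝔞]
    {Δplus : Set (Module.Dual ℝ 𝔞)} {X₀ : 𝔞} (hX₀ : ∀ α ∈ Δplus, α X₀ = 0 ∨ α X₀ = 1)
    {β : Module.Dual ℝ 𝔞} (hβ : β ∈ Δplus ∨ -β ∈ Δplus) (hβX₀ : 0 < β X₀) :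
    β ∈ Δplus ∧ β X₀ = 1 := by
  rcases hβ with hβ | hβ
  · exact ⟨hβ, (hX₀ β hβ).resolve_left hβX₀.ne'⟩
  · rcases hX₀ _ hβ with h | h <;> rw [LinearMap.neg_apply] at h <;> linarith

theorem stmt_3_general {𝔞 : Type*} [AddCommGroup 𝔞] [Module ℝ 𝔞]
    (Δ Δplus : Set (Module.Dual ℝ 𝔞)) (X₀ : 𝔞)
    (hΔ : ∀ α, α ∈ Δ ↔ (α ∈ Δplus ∨ -α ∈ Δplus))
    (hX₀ : ∀ α ∈ Δplus, α X₀ = 0 ∨ α X₀ = 1)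
    (R : Set (Module.Dual ℝ 𝔞)) (hRΔ : R ⊆ Δ)
    (S : Finset (Module.Dual ℝ 𝔞))
    -- `S` is the set of simple roots of `R`
    (hS : ∀ β, β ∈ S ↔ (β ∈ R ∧ ¬ ∃ γ ∈ R, ∃ δ ∈ R, β = γ + δ))
    -- every element of `R` is an `ℕ₀`-linear combination of the simple roots of `R`
    (hcomb : ∀ γ ∈ R, ∃ c : Module.Dual ℝ 𝔞 → ℕ,
        γ = ∑ β ∈ S, (c β : ℝ) • β)
    (hne : ∃ γ, γ ∈ R ∧ γ ∈ Δplus ∧ γ X₀ = 1) :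
    ∃ β ∈ S, β ∈ Δplus ∧ β X₀ = 1 := by
  obtain ⟨γ, hγR, -, hγX₀⟩ := hne
  obtain ⟨c, rfl⟩ := hcomb γ hγR
  obtain ⟨β, hβS, hβX₀⟩ :=
    exists_pos_apply_of_sum_smul_apply_pos (fun β _ => Nat.cast_nonneg (c β))
      (hγX₀ ▸ one_pos)
  have hβΔ := (hΔ β).mp (hRΔ ((hS β).mp hβS).1)
  exact ⟨β, hβS, mem_and_apply_eq_one_of_apply_pos hX₀ hβΔ hβX₀⟩

/-- If every root of `Δ⁺` takes value `0` or `1` on `X₀`, `Δₙ⁺` is the set of positive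
roots with value `1`, and `R` is a positive system (every element of `R` is an
`ℕ`-combination of the simple roots `S` of `R`) with `R ∩ Δₙ⁺ ≠ ∅`, then `R ∩ Δₙ⁺`
contains a root that is simple in `R`. -/
theorem stmt_3 {𝔞 : Type*} [AddCommGroup 𝔞] [Module ℝ 𝔞]
    (Δ Δplus : Set (Module.Dual ℝ 𝔞)) (X₀ : 𝔞)
    (hΔ : ∀ α, α ∈ Δ ↔ (α ∈ Δplus ∨ -α ∈ Δplus))
    (hpos : ∀ α ∈ Δplus, ¬ (-α ∈ Δplus))
    (hX₀ : ∀ α ∈ Δplus, α X₀ = 0 ∨ α X₀ = 1)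
    (R : Set (Module.Dual ℝ 𝔞)) (hRΔ : R ⊆ Δ)
    (S : Finset (Module.Dual ℝ 𝔞))
    -- `S` is the set of simple roots of `R`
    (hS : ∀ β, β ∈ S ↔ (β ∈ R ∧ ¬ ∃ γ ∈ R, ∃ δ ∈ R, β = γ + δ))
    -- every element of `R` is an `ℕ₀`-linear combination of the simple roots of `R`
    (hcomb : ∀ γ ∈ R, ∃ c : Module.Dual ℝ 𝔞 → ℕ,
        γ = ∑ β ∈ S, (c β : ℝ) • β)
    (hne : ∃ γ, γ ∈ R ∧ γ ∈ Δplus ∧ γ X₀ = 1) :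
    ∃ β ∈ S, β ∈ Δplus ∧ β X₀ = 1 :=
  stmt_3_general Δ Δplus X₀ hΔ hX₀ R hRΔ S hS hcomb hne
end
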